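/- arXiv:2511.01422 — 5 statements merged into one kernel-verified Lean document; each statement's English description precedes it below -/
import Mathlib

section
/- Let T be a set of transpositions of Sym(n) (n ≥ 4) whose transposition graph G(T) is a unicyclic triangle-free graph, and let UG_n = Cay(Sym(n), T). Then any two distinct vertices u, v of UG_n have at most 2 common neighbors. -/
/-- Cayley graph of `Sym(n)` with connection set `T`. -/
def cayley {n : ℕ} (T : Set (Equiv.Perm (Fin n))) : SimpleGraph (Equiv.Perm (Fin n)) :=
  SimpleGraph.fromRel fun g h => g⁻¹ * h ∈ T

/-- Transposition generating graph `G(T)` on `{1,…,n}`. -/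
def transGraph {n : ℕ} (T : Set (Equiv.Perm (Fin n))) : SimpleGraph (Fin n) :=
  SimpleGraph.fromRel fun i j => Equiv.swap i j ∈ T

/-- `T` is a set of transpositions. -/
def IsTranspositionSet {n : ℕ} (T : Set (Equiv.Perm (Fin n))) : Prop :=
  ∀ t ∈ T, ∃ i j : Fin n, i ≠ j ∧ t = Equiv.swap i j

/-- A unicyclic graph: connected with exactly one cycle, equivalently
connected with as many edges as vertices. -/
def IsUnicyclic {V : Type*} [Fintype V] (G : SimpleGraph V) : Prop :=
  G.Connected ∧ G.edgeSet.ncard = Fintype.card V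


lemma keyS {n : ℕ} {a b c d : Fin n} (hab : a ≠ b) (hcd : c ≠ d)
    (hne : Equiv.swap a b ≠ Equiv.swap c d) :
    (Equiv.swap c d * Equiv.swap a b) a ≠ a := by
  intro h
  have h1 : Equiv.swap c d b = a := by
    simpa [Equiv.Perm.mul_apply] using h
  rw [Equiv.swap_apply_def] at h1
  split_ifs at h1 with h2 h3
  · apply hne; rw [← h1, h2, Equiv.swap_comm]
  · apply hne; rw [← h1, h3]
  · exact hab h1.symm

lemma swap_mul_fix {n : ℕ} {a b c d x : Fin n} (h1 : x ≠ a) (h2 : x ≠ b) (h3 : x ≠ c) (h4 : x ≠ d) :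
    (Equiv.swap c d * Equiv.swap a b) x = x := by
  simp [Equiv.Perm.mul_apply, Equiv.swap_apply_of_ne_of_ne, *]

lemma disj_sq {n : ℕ} {a b c d : Fin n} (hca : c ≠ a) (hcb : c ≠ b) (hda : d ≠ a) (hdb : d ≠ b) :
    (Equiv.swap c d * Equiv.swap a b) * (Equiv.swap c d * Equiv.swap a b) = 1 := by
  have hd : (Equiv.swap a b).Disjoint (Equiv.swap c d) := by
    intro x
    by_cases hx1 : x = a
    · subst hx1; right; exact Equiv.swap_apply_of_ne_of_ne (Ne.symm hca) (Ne.symm hda)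
    by_cases hx2 : x = b
    · subst hx2; right; exact Equiv.swap_apply_of_ne_of_ne (Ne.symm hcb) (Ne.symm hdb)
    · left; exact Equiv.swap_apply_of_ne_of_ne hx1 hx2
  have hc := hd.commute
  calc (Equiv.swap c d * Equiv.swap a b) * (Equiv.swap c d * Equiv.swap a b)
      = Equiv.swap c d * (Equiv.swap a b * Equiv.swap c d) * Equiv.swap a b := by group
    _ = Equiv.swap c d * (Equiv.swap c d * Equiv.swap a b) * Equiv.swap a b := by rw [hc.eq]
    _ = (Equiv.swap c d * Equiv.swap c d) * (Equiv.swap a b * Equiv.swap a b) := by group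
    _ = 1 := by rw [Equiv.swap_mul_self, Equiv.swap_mul_self, one_mul]

lemma tc_x {n : ℕ} {x y z : Fin n} (hxy : x ≠ y) (hxz : x ≠ z) (hyz : y ≠ z) :
    (Equiv.swap x z * Equiv.swap x y) x = y := by
  simp [Equiv.Perm.mul_apply, Equiv.swap_apply_of_ne_of_ne, hxy.symm, hyz]

lemma tc_y {n : ℕ} {x y z : Fin n} (hxy : x ≠ y) (hxz : x ≠ z) (hyz : y ≠ z) :
    (Equiv.swap x z * Equiv.swap x y) y = z := by
  simp [Equiv.Perm.mul_apply]

lemma tc_z {n : ℕ} {x y z : Fin n} (hxy : x ≠ y) (hxz : x ≠ z) (hyz : y ≠ z) :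
    (Equiv.swap x z * Equiv.swap x y) z = x := by
  simp [Equiv.Perm.mul_apply, Equiv.swap_apply_of_ne_of_ne, hxz.symm, hyz.symm]

lemma shared_canon {n : ℕ} {a b c d : Fin n} (hab : a ≠ b) (hcd : c ≠ d)
    (hne : Equiv.swap a b ≠ Equiv.swap c d)
    (hsh : ¬ (c ≠ a ∧ c ≠ b ∧ d ≠ a ∧ d ≠ b)) :
    ∃ x y z : Fin n, x ≠ y ∧ x ≠ z ∧ y ≠ z ∧
      Equiv.swap c d * Equiv.swap a b = Equiv.swap x z * Equiv.swap x y := by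
  by_cases h1 : c = a
  · subst h1
    have hdb : d ≠ b := fun h => hne (by rw [h])
    exact ⟨c, b, d, hab, hcd, hdb.symm, rfl⟩
  by_cases h2 : c = b
  · subst h2
    have hda : d ≠ a := fun h => hne (by rw [h, Equiv.swap_comm])
    exact ⟨c, a, d, hab.symm, hcd, hda.symm, by rw [Equiv.swap_comm a c]⟩
  by_cases h3 : d = a
  · subst h3
    have hbc : b ≠ c := fun h => hne (by rw [h, Equiv.swap_comm])
    exact ⟨d, b, c, hab, hcd.symm, hbc, by rw [Equiv.swap_comm c d]⟩
  by_cases h4 : d = b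
  · subst h4
    have hac : a ≠ c := fun h => hne (by rw [h])
    exact ⟨d, a, c, hab.symm, hcd.symm, hac, by rw [Equiv.swap_comm c d, Equiv.swap_comm a d]⟩
  · exact absurd ⟨h1, h2, h3, h4⟩ hsh

lemma swap_mem3 {n : ℕ} {x y z a b : Fin n} (hab : a ≠ b)
    (ha : a = x ∨ a = y ∨ a = z) (hb : b = x ∨ b = y ∨ b = z) :
    Equiv.swap a b = Equiv.swap x y ∨ Equiv.swap a b = Equiv.swap x z ∨
      Equiv.swap a b = Equiv.swap y z := by
  rcases ha with rfl | rfl | rfl <;> rcases hb with rfl | rfl | rfl <;>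
    simp_all [Equiv.swap_comm]

/-- Disjoint-case rigidity. -/
lemma pairA {n : ℕ} {a1 b1 c1 d1 a b c d : Fin n}
    (h1 : a1 ≠ b1) (h2 : c1 ≠ d1)
    (hca : c1 ≠ a1) (hcb : c1 ≠ b1) (hda : d1 ≠ a1) (hdb : d1 ≠ b1)
    (hab : a ≠ b) (hcd : c ≠ d) (hne : Equiv.swap a b ≠ Equiv.swap c d)
    (hg : Equiv.swap c d * Equiv.swap a b = Equiv.swap c1 d1 * Equiv.swap a1 b1) :
    Equiv.swap a b = Equiv.swap a1 b1 ∨ Equiv.swap a b = Equiv.swap c1 d1 := by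
  have hgsq : (Equiv.swap c1 d1 * Equiv.swap a1 b1) * (Equiv.swap c1 d1 * Equiv.swap a1 b1) = 1 :=
    disj_sq hca hcb hda hdb
  have hdisj : c ≠ a ∧ c ≠ b ∧ d ≠ a ∧ d ≠ b := by
    by_contra hsh
    obtain ⟨x, y, z, hxy, hxz, hyz, hcan⟩ := shared_canon hab hcd hne hsh
    have h' : (Equiv.swap x z * Equiv.swap x y) * (Equiv.swap x z * Equiv.swap x y) = 1 := by
      rw [← hcan, hg]; exact hgsq
    have h'' : (Equiv.swap x z * Equiv.swap x y) ((Equiv.swap x z * Equiv.swap x y) y) = y := by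
      rw [← Equiv.Perm.mul_apply, h']; rfl
    rw [tc_y hxy hxz hyz, tc_z hxy hxz hyz] at h''
    exact hxy h''
  obtain ⟨hca', hcb', hda', hdb'⟩ := hdisj
  have hb : (Equiv.swap c1 d1 * Equiv.swap a1 b1) a = b := by
    rw [← hg]
    simp [Equiv.Perm.mul_apply, Equiv.swap_apply_of_ne_of_ne, hcb'.symm, hdb'.symm]
  have hmem : a = a1 ∨ a = b1 ∨ a = c1 ∨ a = d1 := by
    by_contra hcon
    push_neg at hcon
    obtain ⟨e1, e2, e3, e4⟩ := hcon
    rw [swap_mul_fix e1 e2 e3 e4] at hb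
    exact hab hb
  have hv1 : (Equiv.swap c1 d1 * Equiv.swap a1 b1) a1 = b1 := by
    simp [Equiv.Perm.mul_apply, Equiv.swap_apply_of_ne_of_ne, hcb.symm, hdb.symm]
  have hv2 : (Equiv.swap c1 d1 * Equiv.swap a1 b1) b1 = a1 := by
    simp [Equiv.Perm.mul_apply, Equiv.swap_apply_of_ne_of_ne, hca.symm, hda.symm]
  have hv3 : (Equiv.swap c1 d1 * Equiv.swap a1 b1) c1 = d1 := by
    simp [Equiv.Perm.mul_apply, Equiv.swap_apply_of_ne_of_ne, hca, hcb]
  have hv4 : (Equiv.swap c1 d1 * Equiv.swap a1 b1) d1 = c1 := by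
    simp [Equiv.Perm.mul_apply, Equiv.swap_apply_of_ne_of_ne, hda, hdb, h2.symm]
  rcases hmem with h | h | h | h
  · rw [h] at hb; rw [hv1] at hb
    left; rw [h, ← hb]
  · rw [h] at hb; rw [hv2] at hb
    left; rw [h, ← hb, Equiv.swap_comm]
  · rw [h] at hb; rw [hv3] at hb
    right; rw [h, ← hb]
  · rw [h] at hb; rw [hv4] at hb
    right; rw [h, ← hb, Equiv.swap_comm]

/-- 3-cycle-case rigidity. -/
lemma pairB {n : ℕ} {x y z a b c d : Fin n}
    (hxy : x ≠ y) (hxz : x ≠ z) (hyz : y ≠ z)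
    (hab : a ≠ b) (hcd : c ≠ d) (hne : Equiv.swap a b ≠ Equiv.swap c d)
    (hg : Equiv.swap c d * Equiv.swap a b = Equiv.swap x z * Equiv.swap x y) :
    Equiv.swap a b = Equiv.swap x y ∨ Equiv.swap a b = Equiv.swap x z ∨
      Equiv.swap a b = Equiv.swap y z := by
  have hka : (Equiv.swap x z * Equiv.swap x y) a ≠ a := by rw [← hg]; exact keyS hab hcd hne
  have hkb : (Equiv.swap x z * Equiv.swap x y) b ≠ b := by
    rw [← hg, Equiv.swap_comm a b]
    exact keyS hab.symm hcd (by rw [Equiv.swap_comm b a]; exact hne)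
  have hma : a = x ∨ a = y ∨ a = z := by
    by_contra hcon; push_neg at hcon
    exact hka (swap_mul_fix hcon.1 hcon.2.1 hcon.1 hcon.2.2)
  have hmb : b = x ∨ b = y ∨ b = z := by
    by_contra hcon; push_neg at hcon
    exact hkb (swap_mul_fix hcon.1 hcon.2.1 hcon.1 hcon.2.2)
  exact swap_mem3 hab hma hmb

lemma swap_ne12 {n : ℕ} {x y z : Fin n} (hxy : x ≠ y) (hxz : x ≠ z) (hyz : y ≠ z) :
    Equiv.swap x y ≠ Equiv.swap x z := by
  intro h
  have := DFunLike.congr_fun h y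
  rw [Equiv.swap_apply_right, Equiv.swap_apply_of_ne_of_ne hxy.symm hyz] at this
  exact hxy this

lemma swap_ne13 {n : ℕ} {x y z : Fin n} (hxy : x ≠ y) (hxz : x ≠ z) (hyz : y ≠ z) :
    Equiv.swap x y ≠ Equiv.swap y z := by
  intro h
  have := DFunLike.congr_fun h x
  rw [Equiv.swap_apply_left, Equiv.swap_apply_of_ne_of_ne hxy hxz] at this
  exact hxy this.symm

lemma swap_ne23 {n : ℕ} {x y z : Fin n} (hxy : x ≠ y) (hxz : x ≠ z) (hyz : y ≠ z) :
    Equiv.swap x z ≠ Equiv.swap y z := by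
  intro h
  have := DFunLike.congr_fun h x
  rw [Equiv.swap_apply_left, Equiv.swap_apply_of_ne_of_ne hxy hxz] at this
  exact hxz this.symm

lemma pigeon3 {α : Type*} {A B C s1 s2 s3 : α} (hAB : A ≠ B) (hAC : A ≠ C) (hBC : B ≠ C)
    (h12 : s1 ≠ s2) (h13 : s1 ≠ s3) (h23 : s2 ≠ s3)
    (m1 : s1 = A ∨ s1 = B ∨ s1 = C) (m2 : s2 = A ∨ s2 = B ∨ s2 = C)
    (m3 : s3 = A ∨ s3 = B ∨ s3 = C) :
    (A = s1 ∨ A = s2 ∨ A = s3) ∧ (B = s1 ∨ B = s2 ∨ B = s3) ∧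
      (C = s1 ∨ C = s2 ∨ C = s3) := by
  rcases m1 with rfl | rfl | rfl <;> rcases m2 with rfl | rfl | rfl <;>
    rcases m3 with rfl | rfl | rfl <;> tauto

theorem stmt_2 {n : ℕ} (hn : 4 ≤ n) (T : Set (Equiv.Perm (Fin n)))
    (hT : IsTranspositionSet T) (huni : IsUnicyclic (transGraph T))
    (htri : (transGraph T).CliqueFree 3) :
    ∀ u v : Equiv.Perm (Fin n), u ≠ v →
      ((cayley T).neighborSet u ∩ (cayley T).neighborSet v).ncard ≤ 2 := by
  intro u v huv
  by_contra hcard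
  push_neg at hcard
  obtain ⟨t3, ht3sub, ht3card⟩ :=
    Set.exists_subset_card_eq (s := (cayley T).neighborSet u ∩ (cayley T).neighborSet v)
      (n := 3) hcard
  obtain ⟨w1, w2, w3, h12, h13, h23, rfl⟩ := Set.ncard_eq_three.mp ht3card
  have hadjT : ∀ x w : Equiv.Perm (Fin n), (cayley T).Adj x w → x⁻¹ * w ∈ T := by
    intro x w h
    rw [cayley, SimpleGraph.fromRel_adj] at h
    rcases h.2 with h' | h'
    · exact h'
    · obtain ⟨i, j, hij, hsw⟩ := hT _ h'
      have he : x⁻¹ * w = (w⁻¹ * x)⁻¹ := by group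
      rw [he, hsw, Equiv.swap_inv, ← hsw]
      exact h'
  have hmem : ∀ w ∈ (cayley T).neighborSet u ∩ (cayley T).neighborSet v,
      u⁻¹ * w ∈ T ∧ v⁻¹ * w ∈ T := by
    intro w hw
    exact ⟨hadjT u w hw.1, hadjT v w hw.2⟩
  have hm1 := hmem w1 (ht3sub (by simp))
  have hm2 := hmem w2 (ht3sub (by simp))
  have hm3 := hmem w3 (ht3sub (by simp))
  set g : Equiv.Perm (Fin n) := v⁻¹ * u with hgdef
  have hgne : g ≠ 1 := by
    intro h
    apply huv
    have := congrArg (fun p => v * p) h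
    exact (by simpa [hgdef, mul_assoc] using this.symm : v = u).symm
  obtain ⟨a1, b1, hab1, hsval1⟩ := hT _ hm1.1
  obtain ⟨c1, d1, hcd1, htval1⟩ := hT _ hm1.2
  obtain ⟨a2, b2, hab2, hsval2⟩ := hT _ hm2.1
  obtain ⟨c2, d2, hcd2, htval2⟩ := hT _ hm2.2
  obtain ⟨a3, b3, hab3, hsval3⟩ := hT _ hm3.1
  obtain ⟨c3, d3, hcd3, htval3⟩ := hT _ hm3.2
  have hg1 : Equiv.swap c1 d1 * Equiv.swap a1 b1 = g := by
    rw [← htval1, ← Equiv.swap_inv a1 b1, ← hsval1, hgdef]; group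
  have hg2 : Equiv.swap c2 d2 * Equiv.swap a2 b2 = g := by
    rw [← htval2, ← Equiv.swap_inv a2 b2, ← hsval2, hgdef]; group
  have hg3 : Equiv.swap c3 d3 * Equiv.swap a3 b3 = g := by
    rw [← htval3, ← Equiv.swap_inv a3 b3, ← hsval3, hgdef]; group
  have hne1 : Equiv.swap a1 b1 ≠ Equiv.swap c1 d1 := by
    intro h; apply hgne
    rw [← hg1, ← h, Equiv.swap_mul_self]
  have hne2 : Equiv.swap a2 b2 ≠ Equiv.swap c2 d2 := by
    intro h; apply hgne
    rw [← hg2, ← h, Equiv.swap_mul_self]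
  have hne3 : Equiv.swap a3 b3 ≠ Equiv.swap c3 d3 := by
    intro h; apply hgne
    rw [← hg3, ← h, Equiv.swap_mul_self]
  have hs12 : Equiv.swap a1 b1 ≠ Equiv.swap a2 b2 := by
    rw [← hsval1, ← hsval2]
    intro h; exact h12 (mul_left_cancel h)
  have hs13 : Equiv.swap a1 b1 ≠ Equiv.swap a3 b3 := by
    rw [← hsval1, ← hsval3]
    intro h; exact h13 (mul_left_cancel h)
  have hs23 : Equiv.swap a2 b2 ≠ Equiv.swap a3 b3 := by
    rw [← hsval2, ← hsval3]
    intro h; exact h23 (mul_left_cancel h)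
  by_cases hdis : c1 ≠ a1 ∧ c1 ≠ b1 ∧ d1 ≠ a1 ∧ d1 ≠ b1
  · -- disjoint case
    obtain ⟨e1, e2, e3, e4⟩ := hdis
    have m2 := pairA hab1 hcd1 e1 e2 e3 e4 hab2 hcd2 hne2 (hg2.trans hg1.symm)
    have m3 := pairA hab1 hcd1 e1 e2 e3 e4 hab3 hcd3 hne3 (hg3.trans hg1.symm)
    rcases m2 with h2' | h2'
    · exact hs12 h2'.symm
    rcases m3 with h3' | h3'
    · exact hs13 h3'.symm
    exact hs23 (h2'.trans h3'.symm)
  · -- shared case: g is a 3-cycle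
    obtain ⟨x, y, z, hxy, hxz, hyz, hcan⟩ := shared_canon hab1 hcd1 hne1 hdis
    have hgX : g = Equiv.swap x z * Equiv.swap x y := hg1.symm.trans hcan
    have m1 := pairB hxy hxz hyz hab1 hcd1 hne1 (hg1.trans hgX)
    have m2 := pairB hxy hxz hyz hab2 hcd2 hne2 (hg2.trans hgX)
    have m3 := pairB hxy hxz hyz hab3 hcd3 hne3 (hg3.trans hgX)
    have hP := pigeon3 (swap_ne12 hxy hxz hyz) (swap_ne13 hxy hxz hyz)
      (swap_ne23 hxy hxz hyz) hs12 hs13 hs23 m1 m2 m3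
    have hT1 : Equiv.swap a1 b1 ∈ T := hsval1 ▸ hm1.1
    have hT2 : Equiv.swap a2 b2 ∈ T := hsval2 ▸ hm2.1
    have hT3 : Equiv.swap a3 b3 ∈ T := hsval3 ▸ hm3.1
    have hTxy : Equiv.swap x y ∈ T := by
      rcases hP.1 with h | h | h <;> rw [h] <;> assumption
    have hTxz : Equiv.swap x z ∈ T := by
      rcases hP.2.1 with h | h | h <;> rw [h] <;> assumption
    have hTyz : Equiv.swap y z ∈ T := by
      rcases hP.2.2 with h | h | h <;> rw [h] <;> assumption
    apply htri ({x, y, z} : Finset (Fin n))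
    rw [SimpleGraph.isNClique_iff]
    constructor
    · intro p hp q hq hpq
      simp only [Finset.coe_insert, Set.mem_insert_iff, Finset.coe_singleton,
        Set.mem_singleton_iff] at hp hq
      rcases hp with rfl | rfl | rfl <;> rcases hq with rfl | rfl | rfl <;>
        simp_all [transGraph, SimpleGraph.fromRel_adj]
    · rw [Finset.card_insert_of_notMem (by simp [hxy, hxz]),
        Finset.card_insert_of_notMem (by simp [hyz]), Finset.card_singleton]
end

section
/- Let MB_n (n ≥ 4) be the modified bubble-sort graph, decomposed into subgraphs MB_{n-1}^i (i ∈ {1,...,n}) induced by the vertices whose last entry is i. For any two distinct i, j ∈ {1,...,n}, the number of edges of MB_n with one endpoint in MB_{n-1}^i and the other in MB_{n-1}^j equals 2(n-2)!. -/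
open Equiv

lemma card_two_prescribed {n : ℕ} (hn : 2 ≤ n) (a b i j : Fin n) (hab : a ≠ b) (hij : i ≠ j) :
    {g : Equiv.Perm (Fin n) | g a = i ∧ g b = j}.ncard = (n - 2).factorial := by
  classical
  -- construct σ with σ a = i, σ b = j
  obtain ⟨σ, hσa, hσb⟩ : ∃ σ : Perm (Fin n), σ a = i ∧ σ b = j := by
    refine ⟨Equiv.swap ((Equiv.swap a i) b) j * Equiv.swap a i, ?_, ?_⟩
    · simp only [Perm.mul_apply]
      rw [Equiv.swap_apply_left]
      apply Equiv.swap_apply_of_ne_of_ne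
      · intro h
        apply hab
        apply (Equiv.swap a i).injective
        rw [Equiv.swap_apply_left]
        exact h
      · exact hij
    · simp [Perm.mul_apply]
  rw [← Nat.card_coe_set_eq, Set.coe_setOf]
  have e1 : {g : Perm (Fin n) // g a = i ∧ g b = j} ≃
      {k : Perm (Fin n) // k a = a ∧ k b = b} :=
    { toFun := fun g => ⟨σ⁻¹ * g.1, by
        simp [Perm.mul_apply, g.2.1, g.2.2, ← hσa, ← hσb]⟩
      invFun := fun k => ⟨σ * k.1, by
        simp [Perm.mul_apply, k.2.1, k.2.2, hσa, hσb]⟩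
      left_inv := fun g => by simp
      right_inv := fun k => by simp }
  have e2 : {k : Perm (Fin n) // k a = a ∧ k b = b} ≃
      {f : Perm (Fin n) // ∀ x, ¬(x ≠ a ∧ x ≠ b) → f x = x} := by
    refine Equiv.subtypeEquivRight fun k => ?_
    constructor
    · rintro ⟨h1, h2⟩ x hx
      rcases not_and_or.1 hx with h | h
      · rw [not_ne_iff.1 h, h1]
      · rw [not_ne_iff.1 h, h2]
    · intro h
      exact ⟨h a (by simp), h b (by simp)⟩
  have e3 := (Equiv.Perm.subtypeEquivSubtypePerm (fun x : Fin n => x ≠ a ∧ x ≠ b))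
  rw [Nat.card_congr (e1.trans (e2.trans e3.symm))]
  rw [Nat.card_eq_fintype_card, Fintype.card_perm]
  congr 1
  rw [Fintype.card_subtype]
  have : (Finset.univ.filter fun x : Fin n => x ≠ a ∧ x ≠ b) = Finset.univ \ {a, b} := by
    ext x; simp [and_comm]
  rw [this, Finset.card_sdiff_of_subset (by simp), Finset.card_univ, Fintype.card_fin,
    Finset.card_pair hab]



/-- The modified bubble-sort graph: the Cayley graph of `Sym(n)` generated by the
transpositions `(12),(23),…,((n-1)n),(n1)` (positions taken mod `n`). -/
def MB (n : ℕ) : SimpleGraph (Equiv.Perm (Fin n)) :=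
  SimpleGraph.fromRel fun g h =>
    ∃ i : Fin n, h = g * Equiv.swap i ⟨(i.val + 1) % n, Nat.mod_lt _ i.pos⟩

theorem stmt_5 {n : ℕ} (hn : 4 ≤ n) (i j : Fin n) (hij : i ≠ j) :
    {x : Equiv.Perm (Fin n) × Equiv.Perm (Fin n) |
        x.1 ⟨n - 1, by omega⟩ = i ∧ x.2 ⟨n - 1, by omega⟩ = j ∧
          (MB n).Adj x.1 x.2}.ncard = 2 * (n - 2).factorial := by
  classical
  set L : Fin n := ⟨n - 1, by omega⟩ with hL
  set Z : Fin n := ⟨0, by omega⟩ with hZ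
  set M : Fin n := ⟨n - 2, by omega⟩ with hM
  have hLZ : L ≠ Z := by
    simp only [hL, hZ, ne_eq, Fin.mk.injEq]
    omega
  have hML : M ≠ L := by
    simp only [hM, hL, ne_eq, Fin.mk.injEq]
    omega
  have hMZ : M ≠ Z := by
    simp only [hM, hZ, ne_eq, Fin.mk.injEq]
    omega
  have hn1 : (n - 1 + 1) % n = 0 := by
    have h1 : n - 1 + 1 = n := by omega
    rw [h1, Nat.mod_self]
  have hn2 : (n - 2 + 1) % n = n - 1 := by
    rw [Nat.mod_eq_of_lt (by omega)]
    omega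
  have hswapLZ : Equiv.swap L ⟨(L.val + 1) % n, Nat.mod_lt _ L.pos⟩ = Equiv.swap L Z := by
    congr 1
    exact Fin.ext hn1
  have hswapML : Equiv.swap M ⟨(M.val + 1) % n, Nat.mod_lt _ M.pos⟩ = Equiv.swap M L := by
    congr 1
    exact Fin.ext hn2
  have hset : {x : Equiv.Perm (Fin n) × Equiv.Perm (Fin n) |
        x.1 L = i ∧ x.2 L = j ∧ (MB n).Adj x.1 x.2} =
      (fun g : Perm (Fin n) => (g, g * Equiv.swap L Z)) '' {g | g L = i ∧ g Z = j} ∪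
      (fun g : Perm (Fin n) => (g, g * Equiv.swap M L)) '' {g | g L = i ∧ g M = j} := by
    ext ⟨g, h⟩
    simp only [Set.mem_setOf_eq, Set.mem_union, Set.mem_image, MB,
      SimpleGraph.fromRel_adj, Prod.mk.injEq]
    constructor
    · rintro ⟨hg, hh, hne, hrel⟩
      have hrel' : ∃ a : Fin n, h = g * Equiv.swap a ⟨(a.val + 1) % n, Nat.mod_lt _ a.pos⟩ := by
        rcases hrel with ⟨a, ha⟩ | ⟨a, ha⟩
        · exact ⟨a, ha⟩
        · exact ⟨a, by rw [ha, mul_assoc, Equiv.swap_mul_self, mul_one]⟩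
      obtain ⟨a, ha⟩ := hrel'
      have hmove : Equiv.swap a ⟨(a.val + 1) % n, Nat.mod_lt _ a.pos⟩ L ≠ L := by
        intro hfix
        apply hij
        rw [← hg, ← hh, ha]
        simp [Perm.mul_apply, hfix]
      have hcase : L = a ∨ L = ⟨(a.val + 1) % n, Nat.mod_lt _ a.pos⟩ := by
        by_contra hc
        push_neg at hc
        exact hmove (Equiv.swap_apply_of_ne_of_ne hc.1 hc.2)
      rcases hcase with hla | hlb
      · subst hla
        rw [hswapLZ] at ha
        left
        refine ⟨g, ⟨hg, ?_⟩, rfl, ha.symm⟩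
        rw [ha] at hh
        simpa [Perm.mul_apply] using hh
      · have h2 : n - 1 = (a.val + 1) % n := congrArg Fin.val hlb
        have hav : a = M := by
          apply Fin.ext
          show a.val = n - 2
          rcases lt_or_eq_of_le (Nat.succ_le_of_lt a.isLt) with hl | he
          · rw [Nat.mod_eq_of_lt hl] at h2
            omega
          · rw [show a.val + 1 = n from he, Nat.mod_self] at h2
            omega
        subst hav
        rw [hswapML] at ha
        right
        refine ⟨g, ⟨hg, ?_⟩, rfl, ha.symm⟩
        rw [ha] at hh
        simpa [Perm.mul_apply] using hh
    · rintro (⟨g', ⟨hg1, hg2⟩, hgg, hhh⟩ | ⟨g', ⟨hg1, hg2⟩, hgg, hhh⟩) <;>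
        subst hgg <;> subst hhh
      · refine ⟨hg1, ?_, ?_, Or.inl ⟨L, by rw [hswapLZ]⟩⟩
        · simp [Perm.mul_apply, hg2]
        · intro hgh
          apply hij
          rw [← hg1]
          conv_lhs => rw [hgh]
          simp [Perm.mul_apply, hg2]
      · refine ⟨hg1, ?_, ?_, Or.inl ⟨M, by rw [hswapML]⟩⟩
        · simp [Perm.mul_apply, hg2]
        · intro hgh
          apply hij
          rw [← hg1]
          conv_lhs => rw [hgh]
          simp [Perm.mul_apply, hg2]
  rw [hset]
  have hinj1 : Function.Injective (fun g : Perm (Fin n) => (g, g * Equiv.swap L Z)) := by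
    intro x y hxy
    exact (Prod.ext_iff.mp hxy).1
  have hinj2 : Function.Injective (fun g : Perm (Fin n) => (g, g * Equiv.swap M L)) := by
    intro x y hxy
    exact (Prod.ext_iff.mp hxy).1
  have hdisj : Disjoint
      ((fun g : Perm (Fin n) => (g, g * Equiv.swap L Z)) '' {g | g L = i ∧ g Z = j})
      ((fun g : Perm (Fin n) => (g, g * Equiv.swap M L)) '' {g | g L = i ∧ g M = j}) := by
    rw [Set.disjoint_left]
    rintro x ⟨g, _, rfl⟩ ⟨g', _, hg'⟩
    simp only [Prod.mk.injEq] at hg'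
    obtain ⟨rfl, heq⟩ := hg'
    have hs : Equiv.swap M L = Equiv.swap L Z := mul_left_cancel heq
    have h1 : Equiv.swap M L Z = Z := Equiv.swap_apply_of_ne_of_ne (Ne.symm hMZ) (Ne.symm hLZ)
    have h2 : Equiv.swap L Z Z = L := Equiv.swap_apply_right L Z
    rw [hs, h2] at h1
    exact hLZ h1
  rw [Set.ncard_union_eq hdisj (Set.toFinite _) (Set.toFinite _),
    Set.ncard_image_of_injective _ hinj1, Set.ncard_image_of_injective _ hinj2,
    card_two_prescribed (by omega) L Z i j hLZ hij,
    card_two_prescribed (by omega) L M i j (Ne.symm hML) hij]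
  ring
end

section
/- Let MB_n (n ≥ 4) be the modified bubble-sort graph, and let p, q, s ∈ V(MB_n) be three distinct vertices with p adjacent to q. Then p and s have no common neighbor, or q and s have no common neighbor. -/
lemma MB_sign {n : ℕ} (hn : 4 ≤ n) {g h : Equiv.Perm (Fin n)}
    (hadj : (MB n).Adj g h) : Equiv.Perm.sign h = -Equiv.Perm.sign g := by
  have hne : ∀ i : Fin n, i ≠ (⟨(i.val + 1) % n, Nat.mod_lt _ i.pos⟩ : Fin n) := by
    intro i
    have hi := i.isLt
    rw [Fin.ne_iff_vne]
    simp only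
    rcases Nat.lt_or_ge (i.val + 1) n with h1 | h1
    · rw [Nat.mod_eq_of_lt h1]; omega
    · have : i.val + 1 = n := by omega
      rw [this, Nat.mod_self]; omega
  rw [MB, SimpleGraph.fromRel_adj] at hadj
  rcases hadj.2 with ⟨i, hi⟩ | ⟨i, hi⟩
  · rw [hi, Equiv.Perm.sign_mul, Equiv.Perm.sign_swap (hne i), mul_neg_one]
  · rw [hi, Equiv.Perm.sign_mul, Equiv.Perm.sign_swap (hne i), mul_neg_one, neg_neg]

theorem stmt_7 {n : ℕ} (hn : 4 ≤ n) (p q s : Equiv.Perm (Fin n))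
    (hpq : (MB n).Adj p q) (hsp : s ≠ p) (hsq : s ≠ q) :
    (MB n).neighborSet s ∩ (MB n).neighborSet p = ∅ ∨
      (MB n).neighborSet s ∩ (MB n).neighborSet q = ∅ := by
  by_contra hc
  push_neg at hc
  obtain ⟨h1, h2⟩ := hc
  obtain ⟨w, hws, hwp⟩ := h1
  obtain ⟨w', hw's, hw'q⟩ := h2
  have e1 : Equiv.Perm.sign w = -Equiv.Perm.sign s := MB_sign hn hws
  have e2 : Equiv.Perm.sign w = -Equiv.Perm.sign p := MB_sign hn hwp
  have e3 : Equiv.Perm.sign w' = -Equiv.Perm.sign s := MB_sign hn hw's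
  have e4 : Equiv.Perm.sign w' = -Equiv.Perm.sign q := MB_sign hn hw'q
  have e5 : Equiv.Perm.sign q = -Equiv.Perm.sign p := MB_sign hn hpq
  have : Equiv.Perm.sign s = -Equiv.Perm.sign s := by
    rw [e5] at e4
    rw [e1] at e2
    rw [e3] at e4
    simp only [neg_neg, neg_inj] at e2 e4
    rw [e4]; exact e2
  rcases Int.units_eq_one_or (Equiv.Perm.sign s) with h | h <;> rw [h] at this <;>
    exact absurd this (by decide)
end

section
/- Let MB_n (n ≥ 4) be the modified bubble-sort graph and let S ⊆ V(MB_n) with |S| = 4 such that the induced subgraph MB_n[S] is a 4-cycle. Then |N(S)| = 4(n-2) = 4n - 8, where N(S) is the set of vertices outside S adjacent to some vertex of S. -/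
/-- `N(S)`: vertices outside `S` adjacent to some vertex of `S`. -/
def setNbhd {V : Type*} (G : SimpleGraph V) (S : Set V) : Set V :=
  {w | w ∉ S ∧ ∃ v ∈ S, G.Adj v w}

/-!
`N(S)` is the union of the sets `N(v) \ S`, `v ∈ S`. Each vertex of the square has exactly two
neighbours in `S`, so each of these sets has `n - 2` elements, and they are pairwise disjoint:
`MB n` is bipartite (the sign of a permutation is a proper 2-colouring), so adjacent vertices of
`S` have no common neighbour, while opposite ones have only the other two vertices of `S` in
common, because two distinct vertices of `MB n` have at most two common neighbours. For `n ≥ 4`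
the last fact reduces to: if `(i i+1)(j j+1) = (k k+1)(l l+1)` with `i ≠ j`, then `k ∈ {i, j}`.
-/

open Equiv Finset SimpleGraph

section CommonNeighbors

variable {V : Type*} (G : SimpleGraph V) [G.LocallyFinite]

theorem setNbhd_eq_biUnion [DecidableEq V] (S : Finset V) :
    setNbhd G S = ↑(S.biUnion fun v => G.neighborFinset v \ S) := by
  ext w
  simp only [setNbhd, Set.mem_ofPred_eq, coe_biUnion, mem_coe, coe_sdiff, Set.mem_iUnion,
    Set.mem_sdiff, mem_neighborFinset, exists_prop]
  tauto

theorem ncard_setNbhd_of_commonNeighbors_subset [DecidableEq V] {k r : ℕ}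
    (hreg : G.IsRegularOfDegree k) (S : Finset V)
    (hr : ∀ v ∈ S, #(G.neighborFinset v ∩ S) = r)
    (hcommon : ∀ v ∈ S, ∀ w ∈ S, v ≠ w → G.commonNeighbors v w ⊆ S) :
    (setNbhd G S).ncard = #S * (k - r) := by
  rw [setNbhd_eq_biUnion, Set.ncard_coe_finset, card_biUnion]
  · rw [sum_congr rfl fun v hv => ?_, sum_const, smul_eq_mul]
    rw [card_sdiff, inter_comm, hr v hv, card_neighborFinset_eq_degree, hreg.degree_eq]
  · intro v hv w hw hvw
    refine disjoint_left.2 fun u hu hu' => ?_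
    rw [mem_sdiff, mem_neighborFinset] at hu hu'
    exact hu.2 (hcommon v hv w hw hvw ⟨hu.1, hu'.1⟩)

theorem commonNeighbors_subset_range_of_cycleGraph_four (htri : G.CliqueFree 3)
    (hcommon : ∀ v w, v ≠ w → (G.commonNeighbors v w).ncard ≤ 2) (f : cycleGraph 4 ↪g G)
    {i j : Fin 4} (hij : i ≠ j) : G.commonNeighbors (f i) (f j) ⊆ Set.range f := by
  classical
  by_cases hadj : (cycleGraph 4).Adj i j
  · rintro u ⟨hiu, hju⟩
    exact absurd (is3Clique_triple_iff.2 ⟨f.map_adj_iff.2 hadj, hiu, hju⟩) (htri _)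
  have hsquare : ∀ i j : Fin 4, i ≠ j → ¬(cycleGraph 4).Adj i j → ∃ p q, p ≠ q ∧
      (cycleGraph 4).Adj i p ∧ (cycleGraph 4).Adj j p ∧
      (cycleGraph 4).Adj i q ∧ (cycleGraph 4).Adj j q := by decide
  obtain ⟨p, q, hpq, hip, hjp, hiq, hjq⟩ := hsquare i j hij hadj
  have hsub : {f p, f q} ⊆ G.commonNeighbors (f i) (f j) := by
    rintro _ (rfl | rfl)
    exacts [⟨f.map_adj_iff.2 hip, f.map_adj_iff.2 hjp⟩,
      ⟨f.map_adj_iff.2 hiq, f.map_adj_iff.2 hjq⟩]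
  have hfin : (G.commonNeighbors (f i) (f j)).Finite :=
    (G.neighborSet (f i)).toFinite.subset (G.commonNeighbors_subset_neighborSet_left _ _)
  rw [← Set.eq_of_subset_of_ncard_le hsub
    ((Set.ncard_pair (f.injective.ne hpq)).symm ▸ hcommon _ _ (f.injective.ne hij)) hfin]
  rintro _ (rfl | rfl) <;> simp

theorem ncard_setNbhd_range_cycleGraph_four [DecidableEq V] {k : ℕ}
    (hreg : G.IsRegularOfDegree k) (htri : G.CliqueFree 3)
    (hcommon : ∀ v w, v ≠ w → (G.commonNeighbors v w).ncard ≤ 2) (f : cycleGraph 4 ↪g G) :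
    (setNbhd G (Set.range f)).ncard = 4 * (k - 2) := by
  have hrange : Set.range f = ↑(univ.image f) := by simp
  rw [hrange, ncard_setNbhd_of_commonNeighbors_subset G hreg _ (r := 2),
    card_image_of_injective _ f.injective, card_univ, Fintype.card_fin]
  · simp only [mem_image, mem_univ, true_and]
    rintro _ ⟨i, rfl⟩
    have : G.neighborFinset (f i) ∩ univ.image f = ((cycleGraph 4).neighborFinset i).image f := by
      ext w
      simp only [mem_inter, mem_neighborFinset, mem_image, mem_univ, true_and]
      constructor
      · rintro ⟨hw, j, rfl⟩
        exact ⟨j, f.map_adj_iff.1 hw, rfl⟩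
      · rintro ⟨j, hj, rfl⟩
        exact ⟨f.map_adj_iff.2 hj, j, rfl⟩
    rw [this, card_image_of_injective _ f.injective, card_neighborFinset_eq_degree]
    exact cycleGraph_degree_three_le
  · simp only [mem_image, mem_univ, true_and]
    rintro _ ⟨i, rfl⟩ _ ⟨j, rfl⟩ hij
    rw [← hrange]
    exact commonNeighbors_subset_range_of_cycleGraph_four G htri hcommon f (ne_of_apply_ne f hij)

end CommonNeighbors

theorem Fin.ofNat_ne_zero_of_lt {n a : ℕ} [NeZero n] [a.AtLeastTwo] (h : a < n) :
    (OfNat.ofNat a : Fin n) ≠ 0 := by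
  rw [Ne, Fin.ext_iff]
  change ¬a % n = 0
  rw [Nat.mod_eq_of_lt h]
  exact NeZero.ne a

namespace MB

variable {n : ℕ} [NeZero n]

def gen (i : Fin n) : Perm (Fin n) := swap i (i + 1)

theorem gen_apply_left (i : Fin n) : gen i i = i + 1 := swap_apply_left _ _

theorem gen_apply_right (i : Fin n) : gen i (i + 1) = i := swap_apply_right _ _

theorem gen_apply_of_ne {i x : Fin n} (h₁ : x ≠ i) (h₂ : x ≠ i + 1) : gen i x = x :=
  swap_apply_of_ne_of_ne h₁ h₂

theorem gen_mul_self (i : Fin n) : gen i * gen i = 1 := swap_mul_self _ _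

theorem gen_inv (i : Fin n) : (gen i)⁻¹ = gen i := swap_inv _ _

theorem eq_or_eq_of_gen_mul_gen_apply_ne {i j x : Fin n} (hx : (gen i * gen j) x ≠ x) :
    x = i ∨ x = i + 1 ∨ x = j ∨ x = j + 1 := by
  by_contra! h
  exact hx (by rw [Perm.mul_apply, gen_apply_of_ne h.2.2.1 h.2.2.2, gen_apply_of_ne h.1 h.2.1])

theorem self_ne_add_one (hn : 2 ≤ n) (i : Fin n) : i ≠ i + 1 := by
  rw [ne_eq, eq_comm, add_eq_left, Fin.one_eq_zero_iff]
  omega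

theorem gen_ne_one (hn : 2 ≤ n) (i : Fin n) : gen i ≠ 1 := fun h =>
  self_ne_add_one hn i (by rw [← gen_apply_left i, h, Perm.one_apply])

theorem sign_gen (hn : 2 ≤ n) (i : Fin n) : Perm.sign (gen i) = -1 :=
  Perm.sign_swap (self_ne_add_one hn i)

theorem gen_injective (hn : 3 ≤ n) : Function.Injective (gen : Fin n → Perm (Fin n)) := by
  open Fin.CommRing in
  intro i j h
  have hi := gen_apply_left i
  rw [h] at hi
  by_contra hij
  by_cases hj : i = j + 1
  · rw [hj, gen_apply_right] at hi
    exact Fin.ofNat_ne_zero_of_lt (a := 2) hn (by linear_combination -hi)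
  · rw [gen_apply_of_ne hij hj] at hi
    exact self_ne_add_one (by omega) i hi

theorem gen_mul_gen_apply_left (hn : 3 ≤ n) {k l : Fin n} (hkl : k ≠ l) :
    (gen k * gen l) k = k + 1 ∨ ((gen k * gen l) k = k - 1 ∧ l = k - 1) := by
  open Fin.CommRing in
  by_cases hl : k = l + 1
  · have hl' : l = k - 1 := eq_sub_of_add_eq hl.symm
    have hlk : l ≠ k + 1 := fun h =>
      Fin.ofNat_ne_zero_of_lt (a := 2) hn (by linear_combination -(h + hl))
    refine Or.inr ⟨?_, hl'⟩
    rw [Perm.mul_apply, hl, gen_apply_right, ← hl, gen_apply_of_ne hkl.symm hlk, hl']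
  · left
    rw [Perm.mul_apply, gen_apply_of_ne hkl hl, gen_apply_left]

theorem gen_mul_gen_apply_left_ne (hn : 3 ≤ n) {k l : Fin n} (hkl : k ≠ l) :
    (gen k * gen l) k ≠ k := by
  open Fin.CommRing in
  have h1 : (1 : Fin n) ≠ 0 := by rw [Ne, Fin.one_eq_zero_iff]; omega
  rcases gen_mul_gen_apply_left hn hkl with e | ⟨e, -⟩ <;> rw [e] <;> intro e'
  exacts [h1 (by linear_combination e'), h1 (by linear_combination -e')]

theorem gen_mul_gen_ne_gen_add_one_left_mul (hn : 4 ≤ n) {i j l : Fin n} (hij : i ≠ j)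
    (hj : i + 1 ≠ j) (hl : i + 1 ≠ l) : gen i * gen j ≠ gen (i + 1) * gen l := by
  open Fin.CommRing in
  intro h
  have h1 : (1 : Fin n) ≠ 0 := by rw [Ne, Fin.one_eq_zero_iff]; omega
  have h2 : (2 : Fin n) ≠ 0 := Fin.ofNat_ne_zero_of_lt (a := 2) (by omega)
  have h3 : (3 : Fin n) ≠ 0 := Fin.ofNat_ne_zero_of_lt (a := 3) (by omega)
  have hσ : (gen i * gen j) (i + 1) = i := by
    rw [Perm.mul_apply, gen_apply_of_ne hj (fun e => hij (add_right_cancel e)), gen_apply_right]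
  have hσ' := gen_mul_gen_apply_left (by omega) hl
  rw [← h, hσ] at hσ'
  rcases hσ' with e | ⟨-, rfl⟩
  · exact h2 (by linear_combination -e)
  rw [add_sub_cancel_right] at h
  have hfix : gen i (i + 1 + 1) = i + 1 + 1 :=
    gen_apply_of_ne (fun e => h2 (by linear_combination e)) (fun e => h1 (by linear_combination e))
  have hji : gen j i = i + 1 + 1 := by
    refine (gen i).injective (Eq.trans ?_ hfix.symm)
    simpa only [Perm.mul_apply, gen_apply_left] using congrArg (· i) h
  by_cases hi : i = j + 1
  · rw [hi, gen_apply_right] at hji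
    exact h3 (by linear_combination -hji)
  · rw [gen_apply_of_ne hij hi] at hji
    exact h2 (by linear_combination -hji)

theorem gen_mul_gen_ne_gen_add_one_right_mul (hn : 4 ≤ n) {i j l : Fin n} (hij : i ≠ j)
    (hi : j + 1 ≠ i) (hl : j + 1 ≠ l) : gen i * gen j ≠ gen (j + 1) * gen l := by
  open Fin.CommRing in
  intro h
  have h1 : (1 : Fin n) ≠ 0 := by rw [Ne, Fin.one_eq_zero_iff]; omega
  have h2 : (2 : Fin n) ≠ 0 := Fin.ofNat_ne_zero_of_lt (a := 2) (by omega)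
  have h3 : (3 : Fin n) ≠ 0 := Fin.ofNat_ne_zero_of_lt (a := 3) (by omega)
  have hσ := gen_mul_gen_apply_left (by omega) hl
  rw [← h, Perm.mul_apply, gen_apply_right] at hσ
  by_cases hji : j = i + 1
  · rw [hji, gen_apply_right] at hσ
    rcases hσ with e | ⟨e, -⟩
    exacts [h3 (by linear_combination -e), h1 (by linear_combination -e)]
  rw [gen_apply_of_ne hij.symm hji] at hσ
  rcases hσ with e | ⟨-, rfl⟩
  · exact h2 (by linear_combination -e)
  rw [add_sub_cancel_right] at h
  exact hi (gen_injective (by omega) (mul_right_cancel h.symm))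

/-- `gen k * gen l` moves `k`, so `k` lies in the support `{i, i + 1, j, j + 1}` of
`gen i * gen j`; the two positions `i + 1` and `j + 1` are excluded by evaluating both sides. -/
theorem eq_or_eq_of_gen_mul_gen_eq (hn : 4 ≤ n) {i j k l : Fin n} (hij : i ≠ j)
    (h : gen i * gen j = gen k * gen l) : k = i ∨ k = j := by
  have hkl : k ≠ l := by
    rintro rfl
    rw [gen_mul_self, mul_eq_one_iff_eq_inv, gen_inv] at h
    exact hij (gen_injective (by omega) h)
  by_contra! hk
  have hmoved : (gen i * gen j) k ≠ k := h ▸ gen_mul_gen_apply_left_ne (by omega) hkl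
  rcases eq_or_eq_of_gen_mul_gen_apply_ne hmoved with hki | rfl | hkj | rfl
  · exact hk.1 hki
  · exact gen_mul_gen_ne_gen_add_one_left_mul hn hij hk.2 hkl h
  · exact hk.2 hkj
  · exact gen_mul_gen_ne_gen_add_one_right_mul hn hij hk.1 hkl h

theorem adj_iff (hn : 2 ≤ n) {x y : Perm (Fin n)} : (MB n).Adj x y ↔ ∃ i, y = x * gen i := by
  have hsucc (i : Fin n) : (⟨(i.val + 1) % n, Nat.mod_lt _ i.pos⟩ : Fin n) = i + 1 :=
    Fin.ext (by rw [Fin.val_add, Fin.val_one', Nat.add_mod_mod])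
  simp only [MB, fromRel_adj, hsucc]
  change x ≠ y ∧ ((∃ i, y = x * gen i) ∨ ∃ i, x = y * gen i) ↔ _
  constructor
  · rintro ⟨-, ⟨i, rfl⟩ | ⟨i, rfl⟩⟩
    exacts [⟨i, rfl⟩, ⟨i, by rw [mul_assoc, gen_mul_self, mul_one]⟩]
  · rintro ⟨i, rfl⟩
    exact ⟨fun h => gen_ne_one hn i (mul_eq_left.1 h.symm), Or.inl ⟨i, rfl⟩⟩

theorem neighborSet_eq_range (hn : 2 ≤ n) (x : Perm (Fin n)) :
    (MB n).neighborSet x = Set.range (x * gen ·) := by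
  ext y
  simp [adj_iff hn, eq_comm]

theorem isRegularOfDegree [(MB n).LocallyFinite] (hn : 3 ≤ n) : (MB n).IsRegularOfDegree n :=
  fun x => by
    rw [← card_neighborSet_eq_degree, ← Nat.card_eq_fintype_card, Nat.card_coe_set_eq,
      neighborSet_eq_range (by omega),
      Set.ncard_range_of_injective fun i j h => gen_injective hn (mul_left_cancel h),
      Nat.card_eq_fintype_card, Fintype.card_fin]

theorem isBipartite (hn : 2 ≤ n) : (MB n).IsBipartite := by
  refine (Coloring.mk Perm.sign fun {x y} hxy => ?_).colorable
  obtain ⟨i, rfl⟩ := (adj_iff hn).1 hxy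
  rw [map_mul, sign_gen hn, mul_neg_one]
  exact units_ne_neg_self _

theorem ncard_commonNeighbors_le (hn : 4 ≤ n) {x y : Perm (Fin n)} (hxy : x ≠ y) :
    ((MB n).commonNeighbors x y).ncard ≤ 2 := by
  rcases ((MB n).commonNeighbors x y).eq_empty_or_nonempty with h | ⟨w, hxw, hyw⟩
  · simp [h]
  obtain ⟨i, rfl⟩ := (adj_iff (by omega)).1 hxw
  obtain ⟨j, rfl⟩ := (adj_iff (by omega)).1 hyw.symm
  have hij : i ≠ j := by
    rintro rfl
    exact hxy (by rw [mul_assoc, gen_mul_self, mul_one])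
  calc _ ≤ ({x * gen i, x * gen j} : Set _).ncard := Set.ncard_le_ncard ?_
    _ ≤ 2 := (Set.ncard_insert_le _ _).trans (by rw [Set.ncard_singleton])
  rintro _ ⟨hxw', hyw'⟩
  obtain ⟨k, rfl⟩ := (adj_iff (by omega)).1 hxw'
  obtain ⟨l, hl⟩ := (adj_iff (by omega)).1 hyw'.symm
  rw [mul_assoc, mul_assoc] at hl
  rcases eq_or_eq_of_gen_mul_gen_eq hn hij (mul_left_cancel hl) with rfl | rfl <;> simp

end MB

theorem SimpleGraph.exists_cycleGraph_four_embedding {V : Type*} {G : SimpleGraph V}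
    {a b c d : V} (hdistinct : [a, b, c, d].Pairwise (· ≠ ·)) (hab : G.Adj a b)
    (hbc : G.Adj b c) (hcd : G.Adj c d) (hda : G.Adj d a) (hac : ¬G.Adj a c)
    (hbd : ¬G.Adj b d) : ∃ f : cycleGraph 4 ↪g G, Set.range f = {a, b, c, d} := by
  simp only [List.pairwise_cons, List.mem_cons, List.not_mem_nil, forall_eq_or_imp] at hdistinct
  have hinj : Function.Injective ![a, b, c, d] := by
    intro i j hij
    fin_cases i <;> fin_cases j <;> simp_all
  have hadj (i j : Fin 4) :
      G.Adj (![a, b, c, d] i) (![a, b, c, d] j) ↔ (cycleGraph 4).Adj i j := by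
    fin_cases i <;> fin_cases j <;>
      simp +decide [hab, hbc, hcd, hda, hab.symm, hbc.symm, hcd.symm, hda.symm, hac, hbd,
        mt G.adj_symm hac, mt G.adj_symm hbd]
  refine ⟨⟨⟨_, hinj⟩, hadj _ _⟩, ?_⟩
  simp only [RelEmbedding.coe_mk, Function.Embedding.coeFn_mk, Matrix.range_cons,
    Matrix.range_empty, Set.union_empty, Set.singleton_union]

theorem stmt_8_general {n : ℕ} (hn : 4 ≤ n) (S : Set (Equiv.Perm (Fin n)))
    (hcyc : ∃ a b c d : Equiv.Perm (Fin n), [a, b, c, d].Pairwise (· ≠ ·) ∧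
      S = {a, b, c, d} ∧ (MB n).Adj a b ∧ (MB n).Adj b c ∧ (MB n).Adj c d ∧
      (MB n).Adj d a ∧ ¬ (MB n).Adj a c ∧ ¬ (MB n).Adj b d) :
    (setNbhd (MB n) S).ncard = 4 * (n - 2) := by
  classical
  have : NeZero n := ⟨by omega⟩
  obtain ⟨a, b, c, d, hdistinct, rfl, hab, hbc, hcd, hda, hac, hbd⟩ := hcyc
  obtain ⟨f, hf⟩ := exists_cycleGraph_four_embedding hdistinct hab hbc hcd hda hac hbd
  rw [← hf]
  exact ncard_setNbhd_range_cycleGraph_four _ (MB.isRegularOfDegree (by omega))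
    ((MB.isBipartite (by omega)).cliqueFree (by norm_num))
    (fun _ _ => MB.ncard_commonNeighbors_le hn) f

theorem stmt_8 {n : ℕ} (hn : 4 ≤ n) (S : Set (Equiv.Perm (Fin n)))
    (hS : S.ncard = 4)
    (hcyc : ∃ a b c d : Equiv.Perm (Fin n), [a, b, c, d].Pairwise (· ≠ ·) ∧
      S = {a, b, c, d} ∧ (MB n).Adj a b ∧ (MB n).Adj b c ∧ (MB n).Adj c d ∧
      (MB n).Adj d a ∧ ¬ (MB n).Adj a c ∧ ¬ (MB n).Adj b d) :
    (setNbhd (MB n) S).ncard = 4 * (n - 2) :=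
  stmt_8_general hn S hcyc
end

section
/- The connectivity of the modified bubble-sort graph MB_n is n, for n ≥ 4: the minimum size of a vertex set whose removal disconnects MB_n equals n. -/
open Finset

namespace SimpleGraph

lemma mem_image_iso_iff {V : Type*} [DecidableEq V] {G : SimpleGraph V} (φ : G ≃g G)
    {X : Finset V} {v : V} : v ∈ X.image φ ↔ φ.symm v ∈ X := by
  conv_lhs => rw [← φ.apply_symm_apply v]
  exact φ.injective.mem_finset_image

def IsArcTransitive {V : Type*} (G : SimpleGraph V) : Prop :=
  ∀ ⦃u v u' v' : V⦄, G.Adj u v → G.Adj u' v' → ∃ φ : G ≃g G, φ u = u' ∧ φ v = v'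

lemma ncard_neighborSet_eq_degree {V : Type*} [Fintype V] (G : SimpleGraph V)
    [DecidableRel G.Adj] (v : V) : (G.neighborSet v).ncard = G.degree v := by
  rw [Set.ncard_eq_toFinset_card', ← neighborFinset_def, card_neighborFinset_eq_degree]

section Separators

variable {V : Type*} [Fintype V] [DecidableEq V] (G : SimpleGraph V) [DecidableRel G.Adj]

def vertexBoundary (X : Finset V) : Finset V := {v | v ∉ X ∧ ∃ u ∈ X, G.Adj u v}

def exterior (X : Finset V) : Finset V := (X ∪ G.vertexBoundary X)ᶜ

def IsPart (X : Finset V) : Prop := X.Nonempty ∧ (G.exterior X).Nonempty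

def IsFragment (X : Finset V) : Prop :=
  G.IsPart X ∧ ∀ Y, G.IsPart Y → #(G.vertexBoundary X) ≤ #(G.vertexBoundary Y)

def IsAtom (A : Finset V) : Prop := G.IsFragment A ∧ ∀ F, G.IsFragment F → #A ≤ #F

variable {G} {X Y A B : Finset V} {v : V}

@[simp]
lemma mem_vertexBoundary : v ∈ G.vertexBoundary X ↔ v ∉ X ∧ ∃ u ∈ X, G.Adj u v := by
  simp [vertexBoundary]

@[simp]
lemma mem_exterior : v ∈ G.exterior X ↔ v ∉ X ∧ v ∉ G.vertexBoundary X := by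
  simp [exterior]

lemma disjoint_vertexBoundary : Disjoint X (G.vertexBoundary X) :=
  Finset.disjoint_left.mpr fun _ hv h ↦ (mem_vertexBoundary.mp h).1 hv

lemma card_eq_card_inter_add_card_inter_add_card_inter (T : Finset V) :
    #T = #(T ∩ X) + #(T ∩ G.vertexBoundary X) + #(T ∩ G.exterior X) := by
  rw [← card_union_of_disjoint (disjoint_vertexBoundary.mono inter_subset_right
    inter_subset_right), ← inter_union_distrib_left, exterior, ← sdiff_eq_inter_compl,
    card_inter_add_card_sdiff]

lemma vertexBoundary_subset_union_of_subset (h : Y ⊆ X) :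
    G.vertexBoundary Y ⊆ X ∪ G.vertexBoundary X := by
  intro v hv
  obtain ⟨-, u, hu, huv⟩ := mem_vertexBoundary.mp hv
  by_cases hvX : v ∈ X
  · exact mem_union_left _ hvX
  · exact mem_union_right _ (mem_vertexBoundary.mpr ⟨hvX, u, h hu, huv⟩)

lemma exterior_subset_exterior (h : Y ⊆ X) : G.exterior X ⊆ G.exterior Y :=
  compl_subset_compl.mpr <| union_subset (h.trans subset_union_left)
    (vertexBoundary_subset_union_of_subset h)

lemma IsPart.of_subset (hX : G.IsPart X) (h : Y ⊆ X) (hY : Y.Nonempty) : G.IsPart Y :=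
  ⟨hY, hX.2.mono (exterior_subset_exterior h)⟩

lemma vertexBoundary_inter_subset :
    G.vertexBoundary (X ∩ Y) ⊆ (G.vertexBoundary X ∩ Y) ∪
      (G.vertexBoundary X ∩ G.vertexBoundary Y) ∪ (X ∩ G.vertexBoundary Y) := by
  intro v hv
  have hX := vertexBoundary_subset_union_of_subset inter_subset_left hv
  have hY := vertexBoundary_subset_union_of_subset inter_subset_right hv
  have hXY : ¬ (v ∈ X ∧ v ∈ Y) := by simpa using (mem_vertexBoundary.mp hv).1
  simp only [mem_union, mem_inter] at hX hY ⊢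
  tauto

lemma card_vertexBoundary_inter_le :
    #(G.vertexBoundary (X ∩ Y)) ≤ #(G.vertexBoundary X ∩ Y) +
      #(G.vertexBoundary X ∩ G.vertexBoundary Y) + #(X ∩ G.vertexBoundary Y) :=
  (card_le_card vertexBoundary_inter_subset).trans <|
    (card_union_le _ _).trans (Nat.add_le_add_right (card_union_le _ _) _)

lemma vertexBoundary_exterior_subset : G.vertexBoundary (G.exterior X) ⊆ G.vertexBoundary X := by
  intro v hv
  obtain ⟨hv, u, hu, huv⟩ := mem_vertexBoundary.mp hv
  simp only [mem_exterior, not_and, not_not] at hv hu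
  by_cases hvX : v ∈ X
  · exact absurd (mem_vertexBoundary.mpr ⟨hu.1, v, hvX, huv.symm⟩) hu.2
  · exact hv hvX

lemma subset_exterior_exterior : X ⊆ G.exterior (G.exterior X) := by
  intro v hv
  rw [mem_exterior, mem_exterior, not_and_or, not_not]
  exact ⟨.inl hv, fun h ↦ (mem_vertexBoundary.mp (vertexBoundary_exterior_subset h)).1 hv⟩

lemma IsFragment.of_card_le (hF : G.IsFragment X) (hY : G.IsPart Y)
    (h : #(G.vertexBoundary Y) ≤ #(G.vertexBoundary X)) : G.IsFragment Y :=
  ⟨hY, fun Z hZ ↦ h.trans (hF.2 Z hZ)⟩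

lemma IsFragment.vertexBoundary_exterior (hF : G.IsFragment X) :
    G.vertexBoundary (G.exterior X) = G.vertexBoundary X := by
  have hpart : G.IsPart (G.exterior X) :=
    ⟨hF.1.2, hF.1.1.mono subset_exterior_exterior⟩
  exact eq_of_subset_of_card_le vertexBoundary_exterior_subset (hF.2 _ hpart)

lemma IsFragment.exterior (hF : G.IsFragment X) : G.IsFragment (G.exterior X) :=
  hF.of_card_le ⟨hF.1.2, hF.1.1.mono subset_exterior_exterior⟩
    (card_le_card hF.vertexBoundary_exterior.le)

lemma IsFragment.exterior_exterior (hF : G.IsFragment X) : G.exterior (G.exterior X) = X := by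
  rw [SimpleGraph.exterior, hF.vertexBoundary_exterior, SimpleGraph.exterior, compl_union,
    compl_compl, ← sdiff_eq_inter_compl, union_sdiff_right,
    sdiff_eq_self_of_disjoint disjoint_vertexBoundary]

lemma exists_isAtom (hX : G.IsPart X) : ∃ A, G.IsAtom A := by
  classical
  obtain ⟨F, hF, hFmin⟩ := ({Y | G.IsPart Y} : Finset (Finset V)).exists_min_image
    (fun Y ↦ #(G.vertexBoundary Y)) ⟨X, by simpa using hX⟩
  have hFrag : G.IsFragment F :=
    ⟨(mem_filter.mp hF).2, fun Y hY ↦ hFmin Y (by simpa using hY)⟩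
  obtain ⟨A, hA, hAmin⟩ := ({F | G.IsFragment F} : Finset (Finset V)).exists_min_image card
    ⟨F, by simpa using hFrag⟩
  exact ⟨A, (mem_filter.mp hA).2, fun B hB ↦ hAmin B (by simpa using hB)⟩

lemma IsFragment.card_vertexBoundary_inter_exterior_le (hX : G.IsFragment X)
    (h : (X ∩ Y).Nonempty) :
    #(G.vertexBoundary X ∩ G.exterior Y) ≤ #(X ∩ G.vertexBoundary Y) := by
  have := hX.2 _ (hX.1.of_subset inter_subset_left h)
  have := card_vertexBoundary_inter_le (G := G) (X := X) (Y := Y)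
  have := card_eq_card_inter_add_card_inter_add_card_inter (G := G) (X := Y) (G.vertexBoundary X)
  omega

lemma IsAtom.subset_of_inter_nonempty (hA : G.IsAtom A) (hB : G.IsFragment B)
    (h : (A ∩ B).Nonempty) : A ⊆ B := by
  have hAB := hA.1.card_vertexBoundary_inter_exterior_le h
  by_cases hext : (G.exterior A ∩ G.exterior B).Nonempty
  -- The same inequality for the two exteriors is the reverse one, so `A ∩ B` is a fragment.
  · have hBA := hB.exterior.card_vertexBoundary_inter_exterior_le (Y := G.exterior A)
      (by rwa [inter_comm])
    rw [hB.vertexBoundary_exterior, hA.1.exterior_exterior, hA.1.vertexBoundary_exterior,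
      inter_comm, inter_comm (G.exterior B)] at hBA
    have hfrag : G.IsFragment (A ∩ B) := by
      refine hA.1.of_card_le (hA.1.1.of_subset inter_subset_left h) ?_
      have := card_vertexBoundary_inter_le (G := G) (X := A) (Y := B)
      have := card_eq_card_inter_add_card_inter_add_card_inter (G := G) (X := B)
        (G.vertexBoundary A)
      omega
    rw [← eq_of_subset_of_card_le inter_subset_left (hA.2 _ hfrag)]
    exact inter_subset_right
  -- Otherwise `#A ≤ #(G.exterior B)` and the inequality above leave no room for `A ∩ B`.
  · have hcard := hA.2 _ hB.exterior
    have := card_eq_card_inter_add_card_inter_add_card_inter (G := G) (X := B) A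
    have hBc := card_eq_card_inter_add_card_inter_add_card_inter (G := G) (X := A) (G.exterior B)
    have hempty : G.exterior B ∩ G.exterior A = ∅ := by
      rw [inter_comm]
      exact not_nonempty_iff_eq_empty.mp hext
    rw [hempty, card_empty, inter_comm, inter_comm (G.exterior B)] at hBc
    have := h.card_pos
    omega

lemma vertexBoundary_image (φ : G ≃g G) :
    G.vertexBoundary (X.image φ) = (G.vertexBoundary X).image φ := by
  ext v
  rw [mem_image_iso_iff, mem_vertexBoundary, mem_vertexBoundary, mem_image_iso_iff]
  refine and_congr_right fun _ ↦ ⟨fun ⟨u, hu, huv⟩ ↦ ⟨φ.symm u, ?_, ?_⟩,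
    fun ⟨u, hu, huv⟩ ↦ ⟨φ u, ?_, ?_⟩⟩
  · exact (mem_image_iso_iff φ).mp hu
  · exact φ.symm.map_rel_iff.mpr huv
  · rwa [mem_image_iso_iff, φ.symm_apply_apply]
  · rw [← φ.apply_symm_apply v]
    exact φ.map_rel_iff.mpr huv

lemma exterior_image (φ : G ≃g G) : G.exterior (X.image φ) = (G.exterior X).image φ := by
  ext v
  rw [mem_exterior, vertexBoundary_image, mem_image_iso_iff, mem_image_iso_iff,
    mem_image_iso_iff, mem_exterior]

lemma IsPart.image (hX : G.IsPart X) (φ : G ≃g G) : G.IsPart (X.image φ) := by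
  rw [IsPart, exterior_image]
  exact ⟨hX.1.image φ, hX.2.image φ⟩

lemma card_vertexBoundary_image (φ : G ≃g G) :
    #(G.vertexBoundary (X.image φ)) = #(G.vertexBoundary X) := by
  rw [vertexBoundary_image, card_image_of_injective _ φ.injective]

lemma IsFragment.image (hX : G.IsFragment X) (φ : G ≃g G) : G.IsFragment (X.image φ) := by
  refine ⟨hX.1.image φ, fun Y hY ↦ ?_⟩
  have hY' : Y = (Y.image φ.symm).image φ := by
    rw [image_image, φ.self_comp_symm, image_id]
  rw [card_vertexBoundary_image, hY', card_vertexBoundary_image]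
  exact hX.2 _ (hY.image φ.symm)

lemma IsAtom.image (hA : G.IsAtom A) (φ : G ≃g G) : G.IsAtom (A.image φ) := by
  refine ⟨hA.1.image φ, fun F hF ↦ ?_⟩
  rw [card_image_of_injective _ φ.injective]
  exact hA.2 F hF

lemma exists_adj_of_card_vertexBoundary_lt_minDegree (hX : X.Nonempty)
    (h : #(G.vertexBoundary X) < G.minDegree) : ∃ u ∈ X, ∃ w ∈ X, G.Adj u w := by
  obtain ⟨u, hu⟩ := hX
  by_contra! hno
  have hsub : G.neighborFinset u ⊆ G.vertexBoundary X := fun w hw ↦ by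
    rw [mem_neighborFinset] at hw
    exact mem_vertexBoundary.mpr ⟨fun hwX ↦ hno u hu w hwX hw, u, hu, hw⟩
  have := card_le_card hsub
  have := G.minDegree_le_degree u
  rw [card_neighborFinset_eq_degree] at *
  omega

lemma IsAtom.vertexBoundary_eq_empty (hG : G.IsArcTransitive) (hA : G.IsAtom A)
    (h : #(G.vertexBoundary A) < G.minDegree) : G.vertexBoundary A = ∅ := by
  obtain ⟨x, hx, y, hy, hxy⟩ := exists_adj_of_card_vertexBoundary_lt_minDegree hA.1.1.1 h
  refine eq_empty_of_forall_notMem fun v hv ↦ ?_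
  obtain ⟨hvA, u, hu, huv⟩ := mem_vertexBoundary.mp hv
  obtain ⟨φ, rfl, rfl⟩ := hG hxy huv
  have hsub := (hA.image φ).subset_of_inter_nonempty hA.1
    ⟨φ x, mem_inter.mpr ⟨mem_image_of_mem _ hx, hu⟩⟩
  exact hvA (hsub (mem_image_of_mem _ hy))

lemma IsPart.vertexBoundary_nonempty (hG : G.Connected) (hX : G.IsPart X) :
    (G.vertexBoundary X).Nonempty := by
  obtain ⟨u, hu⟩ := hX.1
  obtain ⟨w, hw⟩ := hX.2
  obtain ⟨p⟩ := hG u w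
  obtain ⟨d, -, hd₁, hd₂⟩ := p.exists_boundary_dart (X : Set V) hu (mem_exterior.mp hw).1
  exact ⟨d.snd, mem_vertexBoundary.mpr ⟨hd₂, d.fst, hd₁, d.adj⟩⟩

lemma exists_isPart_vertexBoundary_subset {S : Set V} (hS : ¬ (G.induce Sᶜ).Preconnected) :
    ∃ X, G.IsPart X ∧ ↑(G.vertexBoundary X) ⊆ S := by
  classical
  obtain ⟨u, w, huw⟩ : ∃ u w, ¬ (G.induce Sᶜ).Reachable u w := by
    simpa [Preconnected] using hS
  let X : Finset V := {x | ∃ hx : x ∈ Sᶜ, (G.induce Sᶜ).Reachable u ⟨x, hx⟩}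
  have hbd : ↑(G.vertexBoundary X) ⊆ S := by
    intro y hy
    obtain ⟨hyX, x, hx, hxy⟩ := mem_vertexBoundary.mp hy
    obtain ⟨hxS, hux⟩ := (mem_filter.mp hx).2
    by_contra hyS
    have hadj : (G.induce Sᶜ).Adj ⟨x, hxS⟩ ⟨y, hyS⟩ := hxy
    exact hyX (mem_filter.mpr ⟨mem_univ _, hyS, hux.trans hadj.reachable⟩)
  refine ⟨X, ⟨⟨u, mem_filter.mpr ⟨mem_univ _, u.2, .rfl⟩⟩, ⟨w, ?_⟩⟩, hbd⟩
  rw [mem_exterior]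
  exact ⟨fun hw ↦ huw (mem_filter.mp hw).2.2, fun hw ↦ w.2 (hbd hw)⟩

theorem IsArcTransitive.minDegree_le_ncard (hG : G.IsArcTransitive) (hconn : G.Connected)
    {S : Set V} (hS : ¬ (G.induce Sᶜ).Preconnected) : G.minDegree ≤ S.ncard := by
  obtain ⟨X, hX, hXS⟩ := exists_isPart_vertexBoundary_subset hS
  obtain ⟨A, hA⟩ := exists_isAtom hX
  have hAS : #(G.vertexBoundary A) ≤ S.ncard := by
    refine (hA.1.2 X hX).trans ?_
    rw [← Set.ncard_coe_finset]
    exact Set.ncard_le_ncard hXS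
  by_contra! hlt
  have hne := hA.1.1.vertexBoundary_nonempty hconn
  rw [hA.vertexBoundary_eq_empty hG (hAS.trans_lt hlt)] at hne
  exact not_nonempty_empty hne

lemma not_preconnected_induce_compl_neighborSet (v : V)
    (h : G.degree v + 1 < Fintype.card V) : ¬ (G.induce (G.neighborSet v)ᶜ).Preconnected := by
  obtain ⟨w, -, hw⟩ := exists_mem_notMem_of_card_lt_card (t := univ)
    ((card_insert_le v (G.neighborFinset v)).trans_lt
      (by rwa [card_neighborFinset_eq_degree, card_univ]))
  rw [mem_insert, not_or, mem_neighborFinset] at hw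
  intro hpre
  obtain ⟨p⟩ := hpre ⟨v, G.notMem_neighborSet_self⟩ ⟨w, hw.2⟩
  cases p with
  | nil => exact hw.1 rfl
  | cons hadj _ => exact (Set.notMem_compl_iff.mpr hadj).elim (Subtype.prop _)

end Separators

section Cayley

variable {M : Type*} [Group M] {s : Set M}

variable (s) in
def mulCayleyMulLeft (d : M) : mulCayley s ≃g mulCayley s :=
  ⟨Equiv.mulLeft d, mulCayley_adj_mul_iff_right⟩

@[simp]
lemma mulCayleyMulLeft_apply (d x : M) : mulCayleyMulLeft s d x = d * x := rfl

def mulCayleyMapOfMulEquiv (σ : M ≃* M) (hσ : ∀ x, σ x ∈ s ↔ x ∈ s) :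
    mulCayley s ≃g mulCayley s :=
  ⟨σ.toEquiv, fun {u v} ↦ by
    simp only [MulEquiv.toEquiv_eq_coe, EquivLike.coe_coe, mulCayley_adj, ne_eq,
      EmbeddingLike.apply_eq_iff_eq, ← map_inv, ← map_mul, hσ]⟩

lemma inv_mul_mem_of_mulCayley_adj (hinv : ∀ a ∈ s, a⁻¹ ∈ s) {u v : M}
    (h : (mulCayley s).Adj u v) : u⁻¹ * v ∈ s := by
  rcases ((mulCayley_adj s u v).mp h).2 with h | h
  · exact h
  · simpa using hinv _ h

lemma mulCayley_connected (hs : Subgroup.closure s = ⊤) : (mulCayley s).Connected := by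
  suffices h : ∀ g, (mulCayley s).Reachable 1 g from
    ⟨fun u v ↦ (h u).symm.trans (h v)⟩
  intro g
  have hg : g ∈ Subgroup.closure s := hs ▸ Subgroup.mem_top g
  induction hg using Subgroup.closure_induction with
  | mem x hx =>
    by_cases h1 : 1 = x
    · exact h1 ▸ .rfl
    · exact Adj.reachable ((mulCayley_adj' s 1 x).mpr ⟨h1, x, hx, .inl (one_mul x)⟩)
  | one => exact .rfl
  | mul x y _ _ hx hy =>
    have hxy := (Iso.reachable_iff (φ := mulCayleyMulLeft s x)).mpr hy
    rw [mulCayleyMulLeft_apply, mulCayleyMulLeft_apply, mul_one] at hxy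
    exact hx.trans hxy
  | inv x _ hx =>
    have hx' := (Iso.reachable_iff (φ := mulCayleyMulLeft s x⁻¹)).mpr hx
    rw [mulCayleyMulLeft_apply, mulCayleyMulLeft_apply, mul_one, inv_mul_cancel] at hx'
    exact hx'.symm

lemma mulCayley_isArcTransitive (hinv : ∀ a ∈ s, a⁻¹ ∈ s)
    (htr : ∀ a ∈ s, ∀ b ∈ s,
      ∃ σ : M ≃* M, (∀ x, σ x ∈ s ↔ x ∈ s) ∧ σ a = b) :
    (mulCayley s).IsArcTransitive := by
  intro u v u' v' h h'
  obtain ⟨σ, hσ, hσuv⟩ := htr _ (inv_mul_mem_of_mulCayley_adj hinv h) _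
    (inv_mul_mem_of_mulCayley_adj hinv h')
  refine ⟨(mulCayleyMapOfMulEquiv σ hσ).trans (mulCayleyMulLeft s (u' * (σ u)⁻¹)), ?_, ?_⟩
  · show u' * (σ u)⁻¹ * σ u = u'
    group
  · show u' * (σ u)⁻¹ * σ v = v'
    rw [mul_assoc, ← map_inv, ← map_mul, hσuv, mul_inv_cancel_left]

lemma mulCayley_neighborSet (hinv : ∀ a ∈ s, a⁻¹ ∈ s) (h1 : 1 ∉ s) (g : M) :
    (mulCayley s).neighborSet g = (g * ·) '' s := by
  ext v
  rw [mem_neighborSet, Set.mem_image]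
  constructor
  · intro h
    exact ⟨g⁻¹ * v, inv_mul_mem_of_mulCayley_adj hinv h, mul_inv_cancel_left g v⟩
  · rintro ⟨a, ha, rfl⟩
    refine (mulCayley_adj' s g (g * a)).mpr ⟨fun h ↦ h1 ?_, a, ha, .inl rfl⟩
    rwa [left_eq_mul.mp h] at ha

end Cayley

end SimpleGraph

namespace Equiv.Perm

open SimpleGraph

variable {α : Type*} [DecidableEq α]

def swapsAlong (ρ : Perm α) : Set (Perm α) := Set.range fun i ↦ swap i (ρ i)

variable {ρ τ : Perm α}

lemma conj_swap_eq (hτ : Commute τ ρ) (i : α) :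
    τ * swap i (ρ i) * τ⁻¹ = swap (τ i) (ρ (τ i)) := by
  rw [← swap_apply_apply, ← Perm.mul_apply, hτ.eq, Perm.mul_apply]

lemma conj_mem_swapsAlong_iff (hτ : Commute τ ρ) {x : Perm α} :
    τ * x * τ⁻¹ ∈ swapsAlong ρ ↔ x ∈ swapsAlong ρ := by
  have key : ∀ {τ : Perm α}, Commute τ ρ → ∀ {x}, x ∈ swapsAlong ρ →
      τ * x * τ⁻¹ ∈ swapsAlong ρ := by
    rintro τ hτ _ ⟨i, rfl⟩
    exact ⟨τ i, (conj_swap_eq hτ i).symm⟩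
  refine ⟨fun h ↦ ?_, key hτ⟩
  simpa [mul_assoc] using key hτ.inv_left h

lemma one_notMem_swapsAlong (hρ : ∀ i, ρ i ≠ i) : 1 ∉ swapsAlong ρ := by
  rintro ⟨i, hi⟩
  exact hρ i (swap_eq_one_iff.mp hi).symm

lemma inv_mem_swapsAlong {x : Perm α} (hx : x ∈ swapsAlong ρ) : x⁻¹ ∈ swapsAlong ρ := by
  obtain ⟨i, rfl⟩ := hx
  rw [swap_inv]
  exact ⟨i, rfl⟩

lemma isArcTransitive_mulCayley_swapsAlong [Finite α] (hρ : ρ.IsCycle)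
    (hsupp : ∀ i, ρ i ≠ i) :
    (mulCayley (swapsAlong ρ)).IsArcTransitive := by
  refine mulCayley_isArcTransitive (fun _ ↦ inv_mem_swapsAlong) ?_
  rintro _ ⟨i, rfl⟩ _ ⟨j, rfl⟩
  obtain ⟨t, ht⟩ := hρ.exists_pow_eq (hsupp i) (hsupp j)
  have hcomm : Commute (ρ ^ t) ρ := (Commute.refl ρ).pow_left t
  refine ⟨MulAut.conj (ρ ^ t), fun x ↦ conj_mem_swapsAlong_iff hcomm, ?_⟩
  rw [MulAut.conj_apply, conj_swap_eq hcomm, ht]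

lemma swap_apply_self_injective (h₁ : ∀ i, ρ i ≠ i) (h₂ : ∀ i, ρ (ρ i) ≠ i) :
    Function.Injective fun i ↦ swap i (ρ i) := by
  intro i j hij
  have hi : ρ i = swap j (ρ j) i := by
    simpa using congrArg (· i) hij
  by_contra hne
  by_cases hρj : i = ρ j
  · rw [hρj, swap_apply_right] at hi
    exact h₂ j (hρj ▸ hi)
  · exact h₁ i (hi.trans (swap_apply_of_ne_of_ne hne hρj))

end Equiv.Perm

open Equiv Equiv.Perm SimpleGraph

lemma finRotate_apply_eq_mk {n : ℕ} (i : Fin n) :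
    finRotate n i = ⟨(i.val + 1) % n, Nat.mod_lt _ i.pos⟩ := by
  obtain ⟨m, rfl⟩ : ∃ m, n = m + 1 := ⟨n - 1, by have := i.pos; omega⟩
  ext
  rw [coe_finRotate]
  split_ifs with h
  · simp [h]
  · exact (Nat.mod_eq_of_lt (Nat.succ_lt_succ (Fin.val_lt_last h))).symm

lemma finRotate_finRotate_apply_ne {n : ℕ} (hn : 3 ≤ n) (i : Fin n) :
    finRotate n (finRotate n i) ≠ i := by
  obtain ⟨m, rfl⟩ : ∃ m, n = m + 3 := ⟨n - 3, by omega⟩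
  rw [finRotate_apply, finRotate_apply, add_assoc, ne_eq, add_eq_left, Fin.ext_iff,
    Fin.val_add, Fin.val_one, Fin.val_zero, Nat.mod_eq_of_lt (by omega : 1 + 1 < m + 3)]
  omega

lemma finRotate_apply_ne {n : ℕ} (hn : 2 ≤ n) (i : Fin n) : finRotate n i ≠ i := by
  rw [← Perm.mem_support, support_finRotate_of_le hn]
  exact mem_univ i

lemma MB_eq_mulCayley (n : ℕ) : MB n = mulCayley (swapsAlong (finRotate n)) := by
  unfold MB mulCayley
  congr
  ext g h
  simp only [swapsAlong, Set.exists_range_iff, finRotate_apply_eq_mk, eq_comm]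

lemma closure_swapsAlong_finRotate (n : ℕ) :
    Subgroup.closure (swapsAlong (finRotate n)) = ⊤ := by
  obtain _ | m := n
  · exact Subsingleton.elim _ _
  refine Subgroup.closure_eq_top_of_mclosure_eq_top (top_unique ?_)
  rw [← mclosure_swap_castSucc_succ m]
  refine Submonoid.closure_mono ?_
  rintro _ ⟨i, rfl⟩
  refine ⟨i.castSucc, congrArg _ (Fin.ext ?_)⟩
  rw [coe_finRotate_of_ne_last (Fin.castSucc_ne_last i), Fin.val_succ, Fin.val_castSucc]

lemma MB_connected (n : ℕ) : (MB n).Connected := by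
  rw [MB_eq_mulCayley]
  exact mulCayley_connected (closure_swapsAlong_finRotate n)

lemma MB_isArcTransitive {n : ℕ} (hn : 2 ≤ n) : (MB n).IsArcTransitive := by
  rw [MB_eq_mulCayley]
  exact isArcTransitive_mulCayley_swapsAlong (isCycle_finRotate_of_le hn) (finRotate_apply_ne hn)

lemma ncard_neighborSet_MB {n : ℕ} (hn : 3 ≤ n) (g : Perm (Fin n)) :
    ((MB n).neighborSet g).ncard = n := by
  rw [MB_eq_mulCayley, mulCayley_neighborSet (fun _ ↦ inv_mem_swapsAlong)
    (one_notMem_swapsAlong (finRotate_apply_ne (by omega))),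
    Set.ncard_image_of_injective _ (mul_right_injective g), swapsAlong,
    Set.ncard_range_of_injective (swap_apply_self_injective (finRotate_apply_ne (by omega))
      (finRotate_finRotate_apply_ne hn)), Nat.card_eq_fintype_card, Fintype.card_fin]

open Nat in
lemma add_one_lt_factorial {n : ℕ} (hn : 3 ≤ n) : n + 1 < n ! := by
  obtain ⟨m, rfl⟩ : ∃ m, n = m + 1 := ⟨n - 1, by omega⟩
  have := Nat.self_le_factorial m
  rw [Nat.factorial_succ]
  nlinarith

theorem stmt_15 {n : ℕ} (hn : 4 ≤ n) :
    IsLeast {k : ℕ | ∃ S : Set (Equiv.Perm (Fin n)),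
      S.ncard = k ∧ ¬ ((MB n).induce Sᶜ).Preconnected} n := by
  classical
  have hdeg (g : Perm (Fin n)) : (MB n).degree g = n := by
    rw [← ncard_neighborSet_eq_degree, ncard_neighborSet_MB (by omega)]
  refine ⟨⟨(MB n).neighborSet 1, ncard_neighborSet_MB (by omega) 1,
    not_preconnected_induce_compl_neighborSet 1 ?_⟩, ?_⟩
  · rw [hdeg, Fintype.card_perm, Fintype.card_fin]
    exact add_one_lt_factorial (by omega)
  · rintro k ⟨S, rfl, hS⟩
    calc n ≤ (MB n).minDegree := le_minDegree_of_forall_le_degree _ n fun g ↦ (hdeg g).ge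
      _ ≤ S.ncard := (MB_isArcTransitive (by omega)).minDegree_le_ncard (MB_connected n) hS
end
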